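/- Let γ > 0 be a real number, let α, β be positive integers, and let s be a complex number with Re s > 2. Then ∑_{m,n≥0} (γ + αm + βn)^{−s} = ∑_{j=0}^{β−1} ∑_{k=0}^{α−1} ∑_{ν≥0} (ν+1)·(γ + αβν + αj + βk)^{−s}, where all sums converge absolutely. -/

import Mathlib

/-!
Write `m = βN + j` and `n = αM + k` with `0 ≤ j < β`, `0 ≤ k < α`. Then
`γ + αm + βn = (γ + αj + βk) + αβ(N + M)` depends on `(N, M)` only through `ν = N + M`, which is
attained by exactly `ν + 1` pairs. Absolute convergence for `Re s > 2` follows by comparing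
`γ + αm + βn` with a multiple of `m + n + 1` and counting along the antidiagonals again, which
reduces it to `∑ (ν + 1)^(1 - Re s) < ∞`.
-/

open Complex Finset

lemma comp_add_comp_sigmaAntidiagonalEquivProd {E : Type*} (f : ℕ → E) :
    (fun p : ℕ × ℕ => f (p.1 + p.2)) ∘ HasAntidiagonal.sigmaAntidiagonalEquivProd =
      fun x => f x.1 := by
  ext ⟨n, ⟨p, hp⟩⟩
  simp [HasAntidiagonal.sigmaAntidiagonalEquivProd, (mem_antidiagonal.1 hp)]

lemma hasSum_antidiagonal_const {E : Type*} [AddCommMonoid E] [TopologicalSpace E]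
    (n : ℕ) (x : E) :
    HasSum (fun _ : antidiagonal n => x) ((n + 1) • x) := by
  convert hasSum_fintype (fun _ : antidiagonal n => x)
  simp

lemma HasSum.nsmul_of_prod_comp_add {E : Type*} [AddCommMonoid E] [TopologicalSpace E]
    [ContinuousAdd E] [RegularSpace E] {f : ℕ → E} {a : E}
    (h : HasSum (fun p : ℕ × ℕ => f (p.1 + p.2)) a) :
    HasSum (fun n : ℕ => (n + 1) • f n) a := by
  rw [← HasAntidiagonal.sigmaAntidiagonalEquivProd.hasSum_iff,
    comp_add_comp_sigmaAntidiagonalEquivProd] at h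
  exact h.sigma fun n => hasSum_antidiagonal_const n (f n)

lemma summable_prod_comp_add_iff {f : ℕ → ℝ} (hf : 0 ≤ f) :
    Summable (fun p : ℕ × ℕ => f (p.1 + p.2)) ↔ Summable (fun n : ℕ => (n + 1) * f n) := by
  rw [← HasAntidiagonal.sigmaAntidiagonalEquivProd.summable_iff,
    comp_add_comp_sigmaAntidiagonalEquivProd, summable_sigma_of_nonneg fun x => hf x.1]
  simp only [(hasSum_antidiagonal_const _ _).tsum_eq, nsmul_eq_mul, Nat.cast_add_one]
  exact and_iff_right fun _ => .of_finite

lemma summable_prod_add_add_one_rpow_neg {r : ℝ} (hr : 2 < r) :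
    Summable (fun p : ℕ × ℕ => ((p.1 + p.2 : ℕ) + 1 : ℝ) ^ (-r)) := by
  refine (summable_prod_comp_add_iff (f := fun n : ℕ => ((n : ℝ) + 1) ^ (-r))
    fun _ => by positivity).2 ?_
  have hshift : Summable (fun n : ℕ => ((n + 1 : ℕ) : ℝ) ^ (1 - r)) :=
    (summable_nat_add_iff 1).2 (Real.summable_nat_rpow.2 (by linarith))
  refine hshift.congr fun n => ?_
  rw [Nat.cast_add_one, sub_eq_add_neg, Real.rpow_add (by positivity), Real.rpow_one]

lemma summable_prod_add_mul_add_mul_rpow_neg {γ a b r : ℝ} (hγ : 0 < γ) (ha : 0 < a)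
    (hb : 0 < b) (hr : 2 < r) :
    Summable (fun p : ℕ × ℕ => (γ + a * p.1 + b * p.2) ^ (-r)) := by
  set c := min γ (min a b)
  have hc : 0 < c := lt_min hγ (lt_min ha hb)
  refine ((summable_prod_add_add_one_rpow_neg hr).mul_left (c ^ (-r))).of_nonneg_of_le
    (fun p => by positivity) fun p => ?_
  have hle : c * ((p.1 + p.2 : ℕ) + 1 : ℝ) ≤ γ + a * p.1 + b * p.2 := by
    have : c * p.1 ≤ a * p.1 := by gcongr; exact (min_le_right _ _).trans (min_le_left _ _)
    have : c * p.2 ≤ b * p.2 := by gcongr; exact (min_le_right _ _).trans (min_le_right _ _)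
    have : c ≤ γ := min_le_left _ _
    push_cast
    linarith
  rw [← Real.mul_rpow hc.le (by positivity)]
  exact Real.rpow_le_rpow_of_nonpos (by positivity) hle (by linarith)

def residueEquiv (a b : ℕ) [NeZero a] [NeZero b] : (Fin a × Fin b) × (ℕ × ℕ) ≃ ℕ × ℕ :=
  (Equiv.prodComm _ _).trans <|
    (Equiv.prodProdProdComm ℕ ℕ (Fin a) (Fin b)).trans
      ((Nat.divModEquiv a).prodCongr (Nat.divModEquiv b)).symm

@[simp]
lemma residueEquiv_apply (a b : ℕ) [NeZero a] [NeZero b] (j : Fin a) (k : Fin b) (q : ℕ × ℕ) :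
    residueEquiv a b ((j, k), q) = (q.1 * a + j, q.2 * b + k) := rfl

lemma Summable.tsum_prod_eq_sum_residues {E : Type*} [AddCommGroup E] [UniformSpace E]
    [IsUniformAddGroup E] [CompleteSpace E] [T2Space E] {f : ℕ × ℕ → E} (hf : Summable f)
    (a b : ℕ) [NeZero a] [NeZero b] :
    ∑' p, f p = ∑ j : Fin a, ∑ k : Fin b, ∑' q : ℕ × ℕ, f (q.1 * a + j, q.2 * b + k) := by
  have he : Summable (f ∘ residueEquiv a b) := (residueEquiv a b).summable_iff.2 hf
  rw [← (residueEquiv a b).tsum_eq]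
  exact (he.tsum_prod' he.prod_factor).trans (by rw [tsum_fintype, Fintype.sum_prod_type]; rfl)

theorem barnes_residue_class_decomposition (γ : ℝ) (hγ : 0 < γ) (α β : ℕ)
    (hα : 0 < α) (hβ : 0 < β) (s : ℂ) (hs : 2 < s.re) :
    (Summable fun mn : ℕ × ℕ =>
        ‖((γ : ℂ) + α * mn.1 + β * mn.2) ^ (-s)‖) ∧
    (∀ j ∈ Finset.range β, ∀ k ∈ Finset.range α,
        Summable fun ν : ℕ =>
          ‖((ν : ℂ) + 1) * ((γ : ℂ) + α * β * ν + α * j + β * k) ^ (-s)‖) ∧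
    ∑' mn : ℕ × ℕ, ((γ : ℂ) + α * mn.1 + β * mn.2) ^ (-s) =
      ∑ j ∈ Finset.range β, ∑ k ∈ Finset.range α,
        ∑' ν : ℕ, ((ν : ℂ) + 1) * ((γ : ℂ) + α * β * ν + α * j + β * k) ^ (-s) := by
  have : NeZero α := ⟨hα.ne'⟩
  have : NeZero β := ⟨hβ.ne'⟩
  set f : ℕ × ℕ → ℂ := fun mn => ((γ : ℂ) + α * mn.1 + β * mn.2) ^ (-s)
  set g : ℕ → ℕ → ℕ → ℂ := fun j k ν => ((γ : ℂ) + α * β * ν + α * j + β * k) ^ (-s)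
  have hfibre (j k : ℕ) (q : ℕ × ℕ) : f (q.1 * β + j, q.2 * α + k) = g j k (q.1 + q.2) := by
    simp only [f, g]; push_cast; ring_nf
  have hf : Summable (‖f ·‖) := by
    refine (summable_prod_add_mul_add_mul_rpow_neg hγ (a := α) (b := β) (by positivity)
      (by positivity) hs).congr fun p => ?_
    rw [← Complex.neg_re, ← Complex.norm_cpow_eq_rpow_re_of_pos (by positivity)]
    push_cast; rfl
  have hg (j k : ℕ) : Summable fun q : ℕ × ℕ => ‖g j k (q.1 + q.2)‖ := by
    refine (hf.comp_injective (i := fun q : ℕ × ℕ => (q.1 * β + j, q.2 * α + k)) ?_).congr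
      fun q => by simp only [Function.comp, hfibre]
    intro q q' h
    simp only [Prod.mk.injEq, add_left_inj] at h
    exact Prod.ext (Nat.eq_of_mul_eq_mul_right hβ h.1) (Nat.eq_of_mul_eq_mul_right hα h.2)
  refine ⟨hf, fun j _ k _ => ?_, ?_⟩
  · refine ((summable_prod_comp_add_iff fun _ => norm_nonneg _).1 (hg j k)).congr fun ν => ?_
    rw [norm_mul, ← Nat.cast_add_one (R := ℂ), Complex.norm_natCast, Nat.cast_add_one]
  · rw [hf.of_norm.tsum_prod_eq_sum_residues β α]
    simp_rw [Finset.sum_range, hfibre]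
    refine sum_congr rfl fun j _ => sum_congr rfl fun k _ => ?_
    rw [← (hg j k).of_norm.hasSum.nsmul_of_prod_comp_add.tsum_eq]
    simp only [nsmul_eq_mul, Nat.cast_add_one, g]
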